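/- Let K > 0 and let h : [0,∞) → [0,∞) be nonnegative, nondecreasing, satisfy h(s) = √(2s/π) − K ∫_0^s h(u)²/√(2π(s−u)) du for all s ≥ 0, and suppose h(s) → l as s → ∞. Then K l² ≥ 1. -/

import Mathlib

open MeasureTheory Set Filter

/-!
Since `h` is nondecreasing with limit `l` and `h 0 = 0`, we have `0 ≤ h ≤ l`, so the Abel integral
is at most `l² ∫₀ˢ (2π(s - u))^(-1/2) du = l² √(2s/π)`. The equation then gives
`l ≥ h s ≥ √(2s/π) (1 - K l²)` for every `s ≥ 0`, and letting `s → ∞` forces `1 - K l² ≤ 0`.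
-/

lemma MonotoneOn.le_of_tendsto_atTop {α β : Type*} [LinearOrder α] [Nonempty α]
    [TopologicalSpace β] [Preorder β] [OrderClosedTopology β] {f : α → β} {a : α} {l : β}
    (hf : MonotoneOn f (Ici a)) (hl : Tendsto f atTop (nhds l)) {x : α} (hx : a ≤ x) :
    f x ≤ l :=
  ge_of_tendsto hl <| (eventually_ge_atTop x).mono fun _ hxy => hf hx (hx.trans hxy) hxy

lemma div_sqrt_two_pi_mul_eq (c : ℝ) {x : ℝ} (hx : 0 ≤ x) :
    c / Real.sqrt (2 * Real.pi * x) = c / Real.sqrt (2 * Real.pi) * x ^ (-(1 / 2) : ℝ) := by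
  rw [Real.sqrt_mul (by positivity), Real.sqrt_eq_rpow x, Real.rpow_neg hx]
  ring

lemma intervalIntegrable_div_sqrt_two_pi_mul_sub (c : ℝ) {s : ℝ} (hs : 0 ≤ s) :
    IntervalIntegrable (fun u => c / Real.sqrt (2 * Real.pi * (s - u))) volume 0 s := by
  have hpow : IntervalIntegrable (fun x : ℝ => c / Real.sqrt (2 * Real.pi) * x ^ (-(1 / 2) : ℝ))
      volume 0 s :=
    (intervalIntegral.intervalIntegrable_rpow' (by norm_num)).const_mul _
  have hsqrt : IntervalIntegrable (fun x => c / Real.sqrt (2 * Real.pi * x)) volume 0 s :=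
    hpow.congr fun x hx => (div_sqrt_two_pi_mul_eq c (uIoc_of_le hs ▸ hx).1.le).symm
  simpa using (hsqrt.comp_sub_left s).symm

lemma integral_div_sqrt_two_pi_mul_sub (c : ℝ) {s : ℝ} (hs : 0 ≤ s) :
    ∫ u in (0 : ℝ)..s, c / Real.sqrt (2 * Real.pi * (s - u)) =
      c * Real.sqrt (2 * s / Real.pi) := by
  have hsub := intervalIntegral.integral_comp_sub_left
    (fun x => c / Real.sqrt (2 * Real.pi * x)) (a := 0) (b := s) s
  simp only [sub_zero, sub_self] at hsub
  rw [hsub]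
  have hpow : EqOn (fun x => c / Real.sqrt (2 * Real.pi * x))
      (fun x => c / Real.sqrt (2 * Real.pi) * x ^ (-(1 / 2) : ℝ)) (uIcc 0 s) :=
    fun x hx => div_sqrt_two_pi_mul_eq c (uIcc_of_le hs ▸ hx).1
  rw [intervalIntegral.integral_congr hpow, intervalIntegral.integral_const_mul,
    integral_rpow (by norm_num)]
  have hsqrt : Real.sqrt (2 * s / Real.pi) = 2 * Real.sqrt s / Real.sqrt (2 * Real.pi) := by
    rw [show 2 * s / Real.pi = 2 ^ 2 * s / (2 * Real.pi) by field_simp,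
      Real.sqrt_div' _ (by positivity), Real.sqrt_mul (by norm_num), Real.sqrt_sq (by norm_num)]
  rw [hsqrt, show (-(1 / 2) + 1 : ℝ) = 1 / 2 by norm_num, Real.zero_rpow (by norm_num),
    ← Real.sqrt_eq_rpow]
  ring

lemma integral_div_sqrt_two_pi_mul_sub_le {g : ℝ → ℝ} {M s : ℝ} (hs : 0 ≤ s) (hM : 0 ≤ M)
    (hg : ∀ u ∈ Icc 0 s, g u ≤ M) :
    ∫ u in (0 : ℝ)..s, g u / Real.sqrt (2 * Real.pi * (s - u)) ≤
      M * Real.sqrt (2 * s / Real.pi) := by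
  by_cases hint :
      IntervalIntegrable (fun u => g u / Real.sqrt (2 * Real.pi * (s - u))) volume 0 s
  · rw [← integral_div_sqrt_two_pi_mul_sub M hs]
    exact intervalIntegral.integral_mono_on hs hint
      (intervalIntegrable_div_sqrt_two_pi_mul_sub M hs) fun u hu =>
        div_le_div_of_nonneg_right (hg u hu) (Real.sqrt_nonneg _)
  · rw [intervalIntegral.integral_undef hint]
    positivity

lemma nonpos_of_mul_le_of_tendsto_atTop {α : Type*} {l : Filter α} [l.NeBot] {f : α → ℝ}
    {a b : ℝ} (hf : Tendsto f l atTop) (hle : ∀ᶠ x in l, f x * a ≤ b) : a ≤ 0 := by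
  by_contra! ha
  obtain ⟨x, hx, hgt⟩ := (hle.and ((hf.atTop_mul_const ha).eventually_gt_atTop b)).exists
  exact (lt_of_lt_of_le hgt hx).false

lemma tendsto_sqrt_two_mul_div_pi_atTop :
    Tendsto (fun s : ℝ => Real.sqrt (2 * s / Real.pi)) atTop atTop :=
  Real.tendsto_sqrt_atTop.comp
    ((tendsto_id.const_mul_atTop two_pos).atTop_div_const Real.pi_pos)

theorem limit_lower_bound_general (K : ℝ) (hK : 0 < K) (h : ℝ → ℝ) (l : ℝ)
    (hmono : MonotoneOn h (Ici 0))
    (heq : ∀ s : ℝ, 0 ≤ s →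
      h s = Real.sqrt (2 * s / Real.pi)
        - K * ∫ u in (0:ℝ)..s, (h u) ^ 2 / Real.sqrt (2 * Real.pi * (s - u)))
    (hlim : Tendsto h atTop (nhds l)) :
    1 ≤ K * l ^ 2 := by
  have h_zero : h 0 = 0 := by simpa using heq 0 le_rfl
  have h_nonneg : ∀ u, 0 ≤ u → 0 ≤ h u := fun u hu => h_zero ▸ hmono self_mem_Ici hu hu
  have h_le : ∀ u, 0 ≤ u → h u ≤ l := fun u hu => hmono.le_of_tendsto_atTop hlim hu
  have hkey : ∀ s, 0 ≤ s → Real.sqrt (2 * s / Real.pi) * (1 - K * l ^ 2) ≤ l := by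
    intro s hs
    have hint := integral_div_sqrt_two_pi_mul_sub_le (g := fun u => h u ^ 2) hs (sq_nonneg l)
      fun u hu => pow_le_pow_left₀ (h_nonneg u hu.1) (h_le u hu.1) 2
    linarith [heq s hs, h_le s hs, mul_le_mul_of_nonneg_left hint hK.le]
  linarith [nonpos_of_mul_le_of_tendsto_atTop tendsto_sqrt_two_mul_div_pi_atTop
    ((eventually_ge_atTop 0).mono hkey)]

theorem limit_lower_bound (K : ℝ) (hK : 0 < K) (h : ℝ → ℝ) (l : ℝ)
    (hnn : ∀ s : ℝ, 0 ≤ s → 0 ≤ h s)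
    (hmono : MonotoneOn h (Ici 0))
    (heq : ∀ s : ℝ, 0 ≤ s →
      h s = Real.sqrt (2 * s / Real.pi)
        - K * ∫ u in (0:ℝ)..s, (h u) ^ 2 / Real.sqrt (2 * Real.pi * (s - u)))
    (hlim : Tendsto h atTop (nhds l)) :
    1 ≤ K * l ^ 2 :=
  limit_lower_bound_general K hK h l hmono heq hlim
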